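/- Let H be a connected bipartite graph, let (A, B, φ) be a nice triple of H, and let R ⊆ V(H) be admissible for (A, B, φ). Then for any graph G: hom(H, G; R)² ≤ hom(H, G; ψ_{A,B,φ}(R)) · hom(H, G; ψ_{B,A,φ}(R)); in particular, hom(H, G; R)² ≤ hom(H, G; ψ_{A,B,φ}(R)) · hom(H, G). -/

import Mathlib

open SimpleGraph

/-- `hom(H, G)`: the number of graph homomorphisms from `H` to `G`. -/
noncomputable def homCount {α β : Type} (H : SimpleGraph α) (G : SimpleGraph β) : ℕ :=
  Nat.card (H →g G)

/-- `hom(H, G; R)`: homomorphisms mapping all of `R` to one common vertex. -/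
noncomputable def homCountOn {α β : Type} (H : SimpleGraph α) (G : SimpleGraph β)
    (R : Set α) : ℕ :=
  Nat.card {f : H →g G // ∃ v : β, ∀ u ∈ R, f u = v}

/-- The fixed-point set `F_φ` of a graph automorphism `φ`. -/
def FixedSet {V : Type} {H : SimpleGraph V} (φ : H ≃g H) : Set V := {v | φ v = v}

/-- `(A, B, φ)` is a nice triple of `H`: `φ` is an involutive automorphism; `A`, `B` and
`F_φ` partition `V(H)`; `F_φ` separates `A` and `B` (every walk from `A` to `B` meets
`F_φ`); and `φ(A) = B`. -/
def IsNiceTriple {V : Type} (H : SimpleGraph V) (A B : Set V) (φ : H ≃g H) : Prop :=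
  (∀ v, φ (φ v) = v) ∧
  Disjoint A B ∧ Disjoint A (FixedSet φ) ∧ Disjoint B (FixedSet φ) ∧
  A ∪ B ∪ FixedSet φ = Set.univ ∧
  (∀ a ∈ A, ∀ b ∈ B, ∀ w : H.Walk a b, ∃ v ∈ w.support, v ∈ FixedSet φ) ∧
  ⇑φ '' A = B

/-- `H` is bipartite with parts `X₁` and `X₂`. -/
def IsBipartitionOf {V : Type} (H : SimpleGraph V) (X₁ X₂ : Set V) : Prop :=
  Disjoint X₁ X₂ ∧ X₁ ∪ X₂ = Set.univ ∧
  ∀ ⦃u v⦄, H.Adj u v → (u ∈ X₁ ∧ v ∈ X₂) ∨ (u ∈ X₂ ∧ v ∈ X₁)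

/-- `R` is admissible for the nice triple `(A, B, φ)` (relative to the bipartition
`X₁, X₂` of `H`): all vertices of `R` lie in the same part, and `R` meets both
`A ∪ F_φ` and `B ∪ F_φ`. -/
def IsAdmissible {V : Type} {H : SimpleGraph V} (X₁ X₂ A B : Set V) (φ : H ≃g H)
    (R : Set V) : Prop :=
  (R ⊆ X₁ ∨ R ⊆ X₂) ∧ (R ∩ (A ∪ FixedSet φ)).Nonempty ∧ (R ∩ (B ∪ FixedSet φ)).Nonempty

/-- `ψ_{A,B,φ}(R) = (R ∩ (A ∪ F_φ)) ∪ φ(R ∩ A)`. -/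
def psiSet {V : Type} {H : SimpleGraph V} (A : Set V) (φ : H ≃g H) (R : Set V) : Set V :=
  (R ∩ (A ∪ FixedSet φ)) ∪ ⇑φ '' (R ∩ A)

/-- `H` (connected bipartite, with parts `X₁, X₂`) is reflective: every two-element
subset `R` of a part `X` can be transformed into `X` by a sequence of reflections
`R_{j+1} = ψ_{A_j,B_j,φ_j}(R_j)` along nice triples for which `R_j` is admissible. -/
def IsReflective {V : Type} (H : SimpleGraph V) (X₁ X₂ : Set V) : Prop :=
  ∀ X : Set V, X = X₁ ∨ X = X₂ → ∀ R : Set V, R ⊆ X → R.ncard = 2 →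
    ∃ (m : ℕ) (A B : ℕ → Set V) (φ : ℕ → (H ≃g H)) (Rs : ℕ → Set V),
      Rs 0 = R ∧ Rs m = X ∧
      ∀ j < m, IsNiceTriple H (A j) (B j) (φ j) ∧
        IsAdmissible X₁ X₂ (A j) (B j) (φ j) (Rs j) ∧
        Rs (j + 1) = psiSet (A j) (φ j) (Rs j)

/-!
Let `F` be the fixed-point set of `φ`. Since `F` separates `A` from `B`, every edge of `H` lies
in `H[A ∪ F]` or in `H[B ∪ F]`, so a homomorphism sending `R` to a single vertex `v` is the same
as a pair of homomorphisms of these two sides, both sending the part of `R` they see to `v` and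
agreeing on `F`. Grouping by the restriction to `F` and by `v`, `hom(H,G;R) = ∑ aₖ bₖ`, where
`aₖ` and `bₖ` count the extensions of the data `k` to the two sides. Reflecting the `B`-side
through `φ` shows `hom(H,G;ψ_{A,B,φ}(R)) = ∑ aₖ²` and likewise `hom(H,G;ψ_{B,A,φ}(R)) = ∑ bₖ²`,
so the first inequality is Cauchy–Schwarz, and the second follows from
`hom(H,G;ψ_{B,A,φ}(R)) ≤ hom(H,G)`.
-/

section Pullback

variable {P Q K : Type*}

def pullbackEquivSigma (f : P → K) (g : Q → K) :
    {x : P × Q // f x.1 = g x.2} ≃ Σ k : K, {p // f p = k} × {q // g q = k} where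
  toFun x := ⟨f x.1.1, ⟨x.1.1, rfl⟩, ⟨x.1.2, x.2.symm⟩⟩
  invFun y := ⟨(y.2.1, y.2.2), y.2.1.2.trans y.2.2.2.symm⟩
  left_inv _ := rfl
  right_inv := by
    rintro ⟨k, ⟨p, rfl⟩, q⟩
    rfl

theorem card_pullback_eq_sum [Fintype K] [Finite P] [Finite Q] (f : P → K) (g : Q → K) :
    Nat.card {x : P × Q // f x.1 = g x.2} =
      ∑ k, Nat.card {p // f p = k} * Nat.card {q // g q = k} := by
  simp only [Nat.card_congr (pullbackEquivSigma f g), Nat.card_sigma, Nat.card_prod]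

theorem card_pullback_sq_le [Finite K] [Finite P] [Finite Q] (f : P → K) (g : Q → K) :
    Nat.card {x : P × Q // f x.1 = g x.2} ^ 2 ≤
      Nat.card {x : P × P // f x.1 = f x.2} * Nat.card {x : Q × Q // g x.1 = g x.2} := by
  have := Fintype.ofFinite K
  simp only [card_pullback_eq_sum, ← sq]
  exact Finset.sum_mul_sq_le_sq_mul_sq _ _ _

theorem card_pullback_congr {P' Q' : Type*} {f : P → K} {g : Q → K} {f' : P' → K}
    {g' : Q' → K} (e : P ≃ P') (e' : Q ≃ Q') (he : ∀ p, f' (e p) = f p)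
    (he' : ∀ q, g' (e' q) = g q) :
    Nat.card {x : P × Q // f x.1 = g x.2} = Nat.card {x : P' × Q' // f' x.1 = g' x.2} :=
  Nat.card_congr <| (e.prodCongr e').subtypeEquiv fun x => by simp [he, he']

end Pullback

section

variable {V W : Type} {H : SimpleGraph V} {G : SimpleGraph W}

structure IsSeparation (H : SimpleGraph V) (S T F : Set V) : Prop where
  union_eq : S ∪ T = Set.univ
  inter_eq : S ∩ T = F
  adj : ∀ ⦃u w⦄, H.Adj u w → (u ∈ S ∧ w ∈ S) ∨ (u ∈ T ∧ w ∈ T)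

namespace IsSeparation

variable {S T F : Set V} (hsep : IsSeparation H S T F)
include hsep

theorem subset_left : F ⊆ S := hsep.inter_eq ▸ Set.inter_subset_left

theorem subset_right : F ⊆ T := hsep.inter_eq ▸ Set.inter_subset_right

theorem mem_right_of_notMem_left {u : V} (hu : u ∉ S) : u ∈ T :=
  (hsep.union_eq ▸ Set.mem_univ u : u ∈ S ∪ T).resolve_left hu

theorem exists_hom_extending (p : H.induce S →g G) (q : H.induce T →g G)
    (hpq : ∀ (u : V) (hS : u ∈ S) (hT : u ∈ T), p ⟨u, hS⟩ = q ⟨u, hT⟩) :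
    ∃ f : H →g G, (∀ u (hu : u ∈ S), f u = p ⟨u, hu⟩) ∧ (∀ u (hu : u ∈ T), f u = q ⟨u, hu⟩) := by
  classical
  let g (u : V) : W := if hu : u ∈ S then p ⟨u, hu⟩ else q ⟨u, hsep.mem_right_of_notMem_left hu⟩
  have hgS (u : V) (hu : u ∈ S) : g u = p ⟨u, hu⟩ := dif_pos hu
  have hgT (u : V) (hu : u ∈ T) : g u = q ⟨u, hu⟩ := by
    by_cases hS : u ∈ S
    exacts [(hgS u hS).trans (hpq u hS hu), dif_neg hS]
  refine ⟨⟨g, fun {u w} huw => ?_⟩, hgS, hgT⟩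
  rcases hsep.adj huw with ⟨hu, hw⟩ | ⟨hu, hw⟩
  · rw [hgS u hu, hgS w hw]
    exact p.map_adj (show (H.induce S).Adj ⟨u, hu⟩ ⟨w, hw⟩ from huw)
  · rw [hgT u hu, hgT w hw]
    exact q.map_adj (show (H.induce T).Adj ⟨u, hu⟩ ⟨w, hw⟩ from huw)

end IsSeparation

variable (H G) in
abbrev SideHom (S R : Set V) : Type :=
  {p : (H.induce S →g G) × W // ∀ u : S, (u : V) ∈ R → p.1 u = p.2}

namespace SideHom

variable {S T R R' F : Set V}

/-- A fibre of `key` over `k = (τ, v)` is the set of extensions of `τ : F → W` to `S` that send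
`R ∩ S` to `v`; its size is the `aₖ` (or `bₖ`) of the Cauchy–Schwarz argument. -/
def key (hF : F ⊆ S) (p : SideHom H G S R) : (F → W) × W :=
  (p.1.1 ∘ Set.inclusion hF, p.1.2)

def transport (φ : H ≃g H) (hST : ∀ u, u ∈ S ↔ φ u ∈ T) (hR : ∀ u ∈ S, u ∈ R ↔ φ u ∈ R') :
    SideHom H G T R' ≃ SideHom H G S R where
  toFun p := ⟨(p.1.1.comp (induceHom φ.toHom fun u hu => (hST u).1 hu), p.1.2),
    fun u hu => p.2 _ ((hR u u.2).1 hu)⟩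
  invFun p := ⟨(p.1.1.comp (induceHom φ.symm.toHom fun u hu =>
      (hST _).2 (show φ (φ.symm u) ∈ T by simpa using hu)), p.1.2),
    fun u hu => p.2 _ ((hR _ (Subtype.property _)).2 (show φ (φ.symm u) ∈ R' by simpa using hu))⟩
  left_inv p := by
    ext u
    · exact congrArg p.1.1 (Subtype.ext (φ.apply_symm_apply u))
    · rfl
  right_inv p := by
    ext u
    · exact congrArg p.1.1 (Subtype.ext (φ.symm_apply_apply u))
    · rfl

theorem key_transport (φ : H ≃g H) (hST : ∀ u, u ∈ S ↔ φ u ∈ T)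
    (hR : ∀ u ∈ S, u ∈ R ↔ φ u ∈ R') (hFS : F ⊆ S) (hFT : F ⊆ T) (hφF : ∀ x ∈ F, φ x = x)
    (p : SideHom H G T R') : (transport φ hST hR p).key hFS = p.key hFT := by
  ext x
  · exact congrArg p.1.1 (Subtype.ext (hφF x x.2))
  · rfl

end SideHom

theorem IsSeparation.homCountOn_eq_card_pullback {S T F : Set V}
    (hsep : IsSeparation H S T F) {R : Set V} (hR : R.Nonempty) :
    homCountOn H G R = Nat.card {x : SideHom H G S R × SideHom H G T R //
      x.1.key hsep.subset_left = x.2.key hsep.subset_right} := by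
  obtain ⟨r₀, hr₀⟩ := hR
  have hconst {f : H →g G} (hf : ∃ v, ∀ u ∈ R, f u = v) {u : V} (hu : u ∈ R) : f u = f r₀ := by
    obtain ⟨v, hv⟩ := hf
    rw [hv u hu, hv r₀ hr₀]
  refine Nat.card_eq_of_bijective
    (fun f => ⟨(⟨(f.1.comp (Embedding.induce S).toHom, f.1 r₀), fun u hu => hconst f.2 hu⟩,
      ⟨(f.1.comp (Embedding.induce T).toHom, f.1 r₀), fun u hu => hconst f.2 hu⟩), rfl⟩)
    ⟨fun f g hfg => Subtype.ext (RelHom.ext fun u => ?_), fun x => ?_⟩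
  · by_cases hu : u ∈ S
    · exact DFunLike.congr_fun (congrArg (fun x => x.1.1.1.1) hfg) ⟨u, hu⟩
    · exact DFunLike.congr_fun (congrArg (fun x => x.1.2.1.1) hfg)
        ⟨u, hsep.mem_right_of_notMem_left hu⟩
  obtain ⟨⟨p, q⟩, hpq⟩ := x
  have hagree (u : V) (hS : u ∈ S) (hT : u ∈ T) : p.1.1 ⟨u, hS⟩ = q.1.1 ⟨u, hT⟩ :=
    congrFun (congrArg Prod.fst hpq) ⟨u, hsep.inter_eq ▸ ⟨hS, hT⟩⟩
  have hval : p.1.2 = q.1.2 := congrArg Prod.snd hpq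
  obtain ⟨f, hfS, hfT⟩ := hsep.exists_hom_extending p.1.1 q.1.1 hagree
  have hfR (u : V) (hu : u ∈ R) : f u = p.1.2 := by
    by_cases hS : u ∈ S
    · rw [hfS u hS, p.2 ⟨u, hS⟩ hu]
    · have hT := hsep.mem_right_of_notMem_left hS
      rw [hfT u hT, q.2 ⟨u, hT⟩ hu, hval]
  refine ⟨⟨f, _, hfR⟩, Subtype.ext (Prod.ext (Subtype.ext (Prod.ext ?_ (hfR r₀ hr₀)))
    (Subtype.ext (Prod.ext ?_ ((hfR r₀ hr₀).trans hval))))⟩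
  exacts [RelHom.ext fun u => hfS u u.2, RelHom.ext fun u => hfT u u.2]

namespace IsNiceTriple

variable {A B : Set V} {φ : H ≃g H}

theorem symm (h : IsNiceTriple H A B φ) : IsNiceTriple H B A φ := by
  obtain ⟨hinv, hAB, hAF, hBF, hcover, hsep, himage⟩ := h
  refine ⟨hinv, hAB.symm, hBF, hAF, by rwa [Set.union_comm B], fun b hb a ha w => ?_, ?_⟩
  · simpa using hsep a ha b hb w.reverse
  · rw [← himage, Set.image_image]
    simp [hinv]

theorem apply_mem_right_iff (h : IsNiceTriple H A B φ) {u : V} : φ u ∈ B ↔ u ∈ A := by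
  obtain ⟨hinv, -, -, -, -, -, himage⟩ := h
  refine ⟨fun hu => ?_, fun hu => himage ▸ Set.mem_image_of_mem φ hu⟩
  rw [← himage] at hu
  obtain ⟨a, ha, hau⟩ := hu
  rwa [← φ.injective hau]

theorem not_adj (h : IsNiceTriple H A B φ) {a b : V} (ha : a ∈ A) (hb : b ∈ B) :
    ¬ H.Adj a b := fun hab => by
  obtain ⟨-, -, hAF, hBF, -, hsep, -⟩ := h
  obtain ⟨x, hx, hxF⟩ := hsep a ha b hb hab.toWalk
  simp only [Adj.toWalk, Walk.support_cons, Walk.support_nil, List.mem_cons,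
    List.not_mem_nil, or_false] at hx
  rcases hx with rfl | rfl
  exacts [hAF.notMem_of_mem_left ha hxF, hBF.notMem_of_mem_left hb hxF]

theorem mem_or_mem_or_mem (h : IsNiceTriple H A B φ) (u : V) :
    u ∈ A ∨ u ∈ B ∨ u ∈ FixedSet φ := by
  obtain ⟨-, -, -, -, hcover, -, -⟩ := h
  have hu : u ∈ A ∪ B ∪ FixedSet φ := hcover ▸ Set.mem_univ u
  simpa only [Set.mem_union, or_assoc] using hu

theorem notMem_of_mem_right (h : IsNiceTriple H A B φ) {b : V} (hb : b ∈ B) :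
    b ∉ A ∪ FixedSet φ := by
  obtain ⟨-, hAB, -, hBF, -, -, -⟩ := h
  rintro (ha | hF)
  exacts [hAB.notMem_of_mem_left ha hb, hBF.notMem_of_mem_left hb hF]

theorem isSeparation (h : IsNiceTriple H A B φ) :
    IsSeparation H (A ∪ FixedSet φ) (B ∪ FixedSet φ) (FixedSet φ) where
  union_eq := Set.eq_univ_of_forall fun u => by
    rcases h.mem_or_mem_or_mem u with hu | hu | hu <;> simp [hu]
  inter_eq := by
    obtain ⟨-, hAB, -⟩ := h
    rw [← Set.inter_union_distrib_right, hAB.inter_eq, Set.empty_union]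
  adj u w huw := by
    rcases h.mem_or_mem_or_mem u with hu | hu | hu <;>
      rcases h.mem_or_mem_or_mem w with hw | hw | hw
    all_goals first
      | exact absurd huw (h.not_adj hu hw)
      | exact absurd huw.symm (h.not_adj hw hu)
      | simp [hu, hw]

theorem apply_mem_union_iff (h : IsNiceTriple H A B φ) {u : V} :
    φ u ∈ B ∪ FixedSet φ ↔ u ∈ A ∪ FixedSet φ := by
  simp only [Set.mem_union, h.apply_mem_right_iff, FixedSet, Set.mem_ofPred_eq, h.1 u, eq_comm]

theorem mem_psiSet_iff (h : IsNiceTriple H A B φ) (R : Set V) {u : V}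
    (hu : u ∈ A ∪ FixedSet φ) : u ∈ psiSet A φ R ↔ u ∈ R := by
  refine ⟨?_, fun hR => Or.inl ⟨hR, hu⟩⟩
  rintro (⟨hR, -⟩ | ⟨r, ⟨-, hr⟩, rfl⟩)
  exacts [hR, absurd hu (h.notMem_of_mem_right (h.apply_mem_right_iff.2 hr))]

theorem apply_mem_psiSet_iff (h : IsNiceTriple H A B φ) (R : Set V) {u : V}
    (hu : u ∈ A ∪ FixedSet φ) : φ u ∈ psiSet A φ R ↔ u ∈ R := by
  rcases hu with hu | hu
  · have : φ u ∉ A ∪ FixedSet φ := h.notMem_of_mem_right (h.apply_mem_right_iff.2 hu)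
    simp [psiSet, this, φ.injective.mem_set_image, hu]
  · rw [show φ u = u from hu]
    exact h.mem_psiSet_iff R (Or.inr hu)

theorem homCountOn_psiSet_eq (h : IsNiceTriple H A B φ) {R : Set V}
    (hR : (R ∩ (A ∪ FixedSet φ)).Nonempty) :
    homCountOn H G (psiSet A φ R) =
      Nat.card {x : SideHom H G (A ∪ FixedSet φ) R × SideHom H G (A ∪ FixedSet φ) R //
        x.1.key h.isSeparation.subset_left = x.2.key h.isSeparation.subset_left} := by
  have hsep := h.isSeparation
  rw [hsep.homCountOn_eq_card_pullback (R := psiSet A φ R) (hR.mono fun _ => Or.inl)]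
  exact card_pullback_congr
    (SideHom.transport Iso.refl (fun _ => Iff.rfl) fun u hu => (h.mem_psiSet_iff R hu).symm)
    (SideHom.transport φ (fun _ => h.apply_mem_union_iff.symm)
      fun u hu => (h.apply_mem_psiSet_iff R hu).symm)
    (SideHom.key_transport _ _ _ _ _ fun _ _ => rfl)
    (SideHom.key_transport _ _ _ _ _ fun _ hx => hx)

end IsNiceTriple

end

theorem hom_sq_le_of_nice_triple {V W : Type} [Fintype V] [Fintype W]
    (H : SimpleGraph V) (X₁ X₂ : Set V)
    (A B : Set V) (φ : H ≃g H)
    (hnice : IsNiceTriple H A B φ) (R : Set V)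
    (hadm : IsAdmissible X₁ X₂ A B φ R) (G : SimpleGraph W) :
    homCountOn H G R ^ 2 ≤
      homCountOn H G (psiSet A φ R) * homCountOn H G (psiSet B φ R)
    ∧
    homCountOn H G R ^ 2 ≤ homCountOn H G (psiSet A φ R) * homCount H G := by
  have hsep := hnice.isSeparation
  have hle := card_pullback_sq_le (SideHom.key (H := H) (G := G) (R := R) hsep.subset_left)
    (SideHom.key (H := H) (G := G) (R := R) hsep.subset_right)
  rw [← hsep.homCountOn_eq_card_pullback (hadm.2.1.mono Set.inter_subset_left),
    ← hnice.homCountOn_psiSet_eq hadm.2.1, ← hnice.symm.homCountOn_psiSet_eq hadm.2.2] at hle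
  exact ⟨hle, hle.trans (Nat.mul_le_mul_left _ (Finite.card_subtype_le _))⟩
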